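/- Let G ⊆ K_{m,n} be a connected bipartite graph and let A ⊊ U₁ be a nonempty independent set that is not contained in any two-sided independent set of G. If the ℝ-linear span of H_A ∩ σ_G^∨ has dimension m+n−2 (i.e., H_A ∩ σ_G^∨ is a facet of σ_G^∨), then A = U₁ ∖ {u} for some vertex u ∈ U₁, and moreover H_A ∩ σ_G^∨ = {x ∈ σ_G^∨ : x_u = 0}. -/

import Mathlib

/-!
Common setup: a bipartite graph `G ⊆ K_{m,n}` is encoded by an edge relation
`E : Fin m → Fin n → Prop` (vertex set `V = Fin m ⊕ Fin n`, with `U₁` the left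
summand and `U₂` the right summand).
-/

namespace ToricBipartite

open Sum Finset

variable {m n : ℕ}

/-- The simple graph on `Fin m ⊕ Fin n` determined by the bipartite edge relation `E`. -/
def toGraph (E : Fin m → Fin n → Prop) : SimpleGraph (Fin m ⊕ Fin n) where
  Adj u v :=
    (∃ i j, u = inl i ∧ v = inr j ∧ E i j) ∨ (∃ i j, u = inr j ∧ v = inl i ∧ E i j)
  symm := by
    refine ⟨?_⟩
    rintro u v (⟨i, j, hu, hv, h⟩ | ⟨i, j, hu, hv, h⟩)
    · exact Or.inr ⟨i, j, hv, hu, h⟩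
    · exact Or.inl ⟨i, j, hv, hu, h⟩
  loopless := by
    refine ⟨?_⟩
    rintro u (⟨i, j, hu, hv, h⟩ | ⟨i, j, hu, hv, h⟩) <;> rw [hu] at hv <;> simp at hv

/-- The generator `e^i + f^j` of the dual edge cone. -/
def gen (i : Fin m) (j : Fin n) : (Fin m ⊕ Fin n) → ℝ :=
  Pi.single (inl i) 1 + Pi.single (inr j) 1

/-- The set of generators `{e^i + f^j : (i, m+j) ∈ E(G)}` of the dual edge cone. -/
def genSet (E : Fin m → Fin n → Prop) : Set ((Fin m ⊕ Fin n) → ℝ) :=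
  {x | ∃ i j, E i j ∧ x = gen i j}

/-- The dual edge cone `σ_G^∨ ⊆ ℝ^{m+n}`: all nonnegative combinations of the
generators `e^i + f^j` over the edges of `G`. -/
def dualEdgeCone (E : Fin m → Fin n → Prop) : Set ((Fin m ⊕ Fin n) → ℝ) :=
  {x | ∃ c : Fin m → Fin n → ℝ, (∀ i j, 0 ≤ c i j) ∧ (∀ i j, c i j ≠ 0 → E i j) ∧
      x = ∑ i, ∑ j, c i j • gen i j}

/-- The neighbour set `N(A) ⊆ U₂` of a set `A ⊆ U₁`. -/
def nbrR (E : Fin m → Fin n → Prop) [∀ i j, Decidable (E i j)]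
    (A : Finset (Fin m)) : Finset (Fin n) :=
  univ.filter fun j => ∃ i ∈ A, E i j

/-- The neighbour set `N(B) ⊆ U₁` of a set `B ⊆ U₂`. -/
def nbrL (E : Fin m → Fin n → Prop) [∀ i j, Decidable (E i j)]
    (B : Finset (Fin n)) : Finset (Fin m) :=
  univ.filter fun i => ∃ j ∈ B, E i j

/-- `A₁ ⊔ A₂ ⊆ U₁ ⊔ U₂` contains no pair of adjacent vertices (since the graph is
bipartite this says there is no edge between `A₁` and `A₂`). -/
def IsIndepPair (E : Fin m → Fin n → Prop)
    (A₁ : Finset (Fin m)) (A₂ : Finset (Fin n)) : Prop :=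
  ∀ i ∈ A₁, ∀ j ∈ A₂, ¬ E i j

/-- A two-sided independent set `B₁ ⊔ B₂`, with `∅ ≠ B₁ ⊊ U₁` and `∅ ≠ B₂ ⊊ U₂`. -/
def TwoSidedIndep (E : Fin m → Fin n → Prop)
    (B₁ : Finset (Fin m)) (B₂ : Finset (Fin n)) : Prop :=
  B₁.Nonempty ∧ B₁ ≠ univ ∧ B₂.Nonempty ∧ B₂ ≠ univ ∧ IsIndepPair E B₁ B₂

/-- A two-sided *maximal* independent set: two-sided independent, and contained in no
strictly larger independent set of the graph. -/
def TwoSidedMaxIndep (E : Fin m → Fin n → Prop)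
    (A₁ : Finset (Fin m)) (A₂ : Finset (Fin n)) : Prop :=
  TwoSidedIndep E A₁ A₂ ∧
    ∀ B₁ B₂, IsIndepPair E B₁ B₂ → A₁ ⊆ B₁ → A₂ ⊆ B₂ → B₁ = A₁ ∧ B₂ = A₂

/-- Membership in `I_G^(*)`: either a two-sided maximal independent set, or a one-sided
independent set of the form `U_i ∖ {v}` not contained in any two-sided independent set.
A set is encoded as the pair of its parts `(A₁, A₂) = (A ∩ U₁, A ∩ U₂)`. -/
def InIStar (E : Fin m → Fin n → Prop)
    (A₁ : Finset (Fin m)) (A₂ : Finset (Fin n)) : Prop :=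
  TwoSidedMaxIndep E A₁ A₂ ∨
    (A₂ = ∅ ∧ A₁.Nonempty ∧ (∃ v, A₁ = {v}ᶜ) ∧
      ¬ ∃ B₁ B₂, TwoSidedIndep E B₁ B₂ ∧ A₁ ⊆ B₁) ∨
    (A₁ = ∅ ∧ A₂.Nonempty ∧ (∃ v, A₂ = {v}ᶜ) ∧
      ¬ ∃ B₁ B₂, TwoSidedIndep E B₁ B₂ ∧ A₂ ⊆ B₂)

/-- The edge relation of the associated (spanning) subgraph `G{A}` of `A ∈ I_G^(*)`:
for one-sided `A = A₁ ⊆ U₁` the edges of `G[A₁ ⊔ N(A₁)] ⊔ G[(U₁∖A₁) ⊔ (U₂∖N(A₁))]`,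
symmetrically for one-sided `A = A₂ ⊆ U₂`, and for two-sided `A = A₁ ⊔ A₂` the edges of
`G[A₁ ⊔ N(A₁)] ⊔ G[A₂ ⊔ N(A₂)]`. -/
def assoc (E : Fin m → Fin n → Prop) [∀ i j, Decidable (E i j)]
    (A₁ : Finset (Fin m)) (A₂ : Finset (Fin n)) : Fin m → Fin n → Prop := fun i j =>
  E i j ∧
    (if A₂ = ∅ then i ∈ A₁ ∨ j ∉ nbrR E A₁
     else if A₁ = ∅ then j ∈ A₂ ∨ i ∉ nbrL E A₂
     else i ∈ A₁ ∨ j ∈ A₂)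

instance (E : Fin m → Fin n → Prop) [∀ i j, Decidable (E i j)]
    (A₁ : Finset (Fin m)) (A₂ : Finset (Fin n)) (i : Fin m) (j : Fin n) :
    Decidable (assoc E A₁ A₂ i j) := by
  unfold assoc; infer_instance

/-- The number of connected components of the bipartite graph with edge relation `E`
(isolated vertices count as connected components). -/
noncomputable def numComponents (E : Fin m → Fin n → Prop) : ℕ :=
  Nat.card (toGraph E).ConnectedComponent

/-- `A ∈ I_G^(1)`: a first independent set, i.e. an element of `I_G^(*)` whose associated
subgraph `G{A}` has exactly two connected components. -/
def FirstIndep (E : Fin m → Fin n → Prop) [∀ i j, Decidable (E i j)]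
    (A₁ : Finset (Fin m)) (A₂ : Finset (Fin n)) : Prop :=
  InIStar E A₁ A₂ ∧ numComponents (assoc E A₁ A₂) = 2

/-- The supporting hyperplane `H_{A₁}` of a one-sided set `A₁ ⊆ U₁`:
`Σ_{v ∈ A₁} x_v = Σ_{v ∈ N(A₁)} x_v`. -/
def hyp1 (E : Fin m → Fin n → Prop) [∀ i j, Decidable (E i j)]
    (A₁ : Finset (Fin m)) : Set ((Fin m ⊕ Fin n) → ℝ) :=
  {x | ∑ i ∈ A₁, x (inl i) = ∑ j ∈ nbrR E A₁, x (inr j)}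

/-- The supporting hyperplane `H_{A₂}` of a one-sided set `A₂ ⊆ U₂`. -/
def hyp2 (E : Fin m → Fin n → Prop) [∀ i j, Decidable (E i j)]
    (A₂ : Finset (Fin n)) : Set ((Fin m ⊕ Fin n) → ℝ) :=
  {x | ∑ j ∈ A₂, x (inr j) = ∑ i ∈ nbrL E A₂, x (inl i)}

/-- The supporting hyperplane `H_A` of `A = A₁ ⊔ A₂`, taken with respect to a nonempty
one-sided part of `A`. -/
def hypA (E : Fin m → Fin n → Prop) [∀ i j, Decidable (E i j)]
    (A₁ : Finset (Fin m)) (A₂ : Finset (Fin n)) : Set ((Fin m ⊕ Fin n) → ℝ) :=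
  if A₁ = ∅ then hyp2 E A₂ else hyp1 E A₁

/-- Connectivity of the induced subgraph `G[S ⊔ T]` for `S ⊆ U₁`, `T ⊆ U₂`. -/
def InducedConnected (E : Fin m → Fin n → Prop)
    (S : Finset (Fin m)) (T : Finset (Fin n)) : Prop :=
  ((toGraph E).induce
    ((inl '' (S : Set (Fin m)) ∪ inr '' (T : Set (Fin n))) : Set (Fin m ⊕ Fin n))).Connected

/-- The degree (valency) sequence of the bipartite graph with edge relation `E`,
as a vector in `ℝ^{m+n}`. -/
def valVec (E : Fin m → Fin n → Prop) [∀ i j, Decidable (E i j)] :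
    (Fin m ⊕ Fin n) → ℝ :=
  Sum.elim (fun i => ((univ.filter fun j => E i j).card : ℝ))
    (fun j => ((univ.filter fun i => E i j).card : ℝ))

/-!
Every vertex of `A` has a neighbour, so if `N(A) ≠ U₂` then `A ⊔ (U₂ ∖ N(A))` would be a
two-sided independent set containing `A`; hence `N(A) = U₂`. Every point of `σ_G^∨` has
nonnegative coordinates and the same coordinate sum on `U₁` as on `U₂`, so on the cone the
equation of `H_A` reads `Σ_{i ∉ A} x_i = 0`, i.e. `x_i = 0` for all `i ∉ A`. Thus the span of
`H_A ∩ σ_G^∨` lies in a subspace of codimension `|U₁ ∖ A| + 1`, and the facet condition forces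
`|U₁ ∖ A| = 1`.
-/

variable {E : Fin m → Fin n → Prop}

lemma sum_smul_gen_apply_inl (c : Fin m → Fin n → ℝ) (i₀ : Fin m) :
    (∑ i, ∑ j, c i j • gen i j) (inl i₀) = ∑ j, c i₀ j := by
  simp [Finset.sum_apply, gen, Pi.single_apply]

lemma sum_smul_gen_apply_inr (c : Fin m → Fin n → ℝ) (j₀ : Fin n) :
    (∑ i, ∑ j, c i j • gen i j) (inr j₀) = ∑ i, c i j₀ := by
  simp [Finset.sum_apply, gen, Pi.single_apply]

lemma apply_inl_nonneg_of_mem_dualEdgeCone {x : (Fin m ⊕ Fin n) → ℝ}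
    (hx : x ∈ dualEdgeCone E) (i : Fin m) : 0 ≤ x (inl i) := by
  obtain ⟨c, hc, -, rfl⟩ := hx
  rw [sum_smul_gen_apply_inl]
  exact sum_nonneg fun j _ => hc i j

lemma sum_inl_eq_sum_inr_of_mem_dualEdgeCone {x : (Fin m ⊕ Fin n) → ℝ}
    (hx : x ∈ dualEdgeCone E) : ∑ i, x (inl i) = ∑ j, x (inr j) := by
  obtain ⟨c, -, -, rfl⟩ := hx
  simp only [sum_smul_gen_apply_inl, sum_smul_gen_apply_inr]
  exact sum_comm

lemma exists_edge_of_connected [Nontrivial (Fin m ⊕ Fin n)] (hconn : (toGraph E).Connected)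
    (i : Fin m) : ∃ j, E i j := by
  obtain ⟨v, ⟨_, j, ⟨⟩, -, hE⟩ | ⟨_, _, ⟨⟩, -, -⟩⟩ :=
    hconn.preconnected.exists_adj_of_nontrivial (inl i)
  exact ⟨j, hE⟩

variable [∀ i j, Decidable (E i j)]

lemma nbrR_eq_univ_of_not_subset_twoSidedIndep {A : Finset (Fin m)} (hA : A.Nonempty)
    (hAne : A ≠ univ) (hN : (nbrR E A).Nonempty)
    (hnot : ¬ ∃ B₁ B₂, TwoSidedIndep E B₁ B₂ ∧ A ⊆ B₁) : nbrR E A = univ := by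
  by_contra hNne
  refine hnot ⟨A, (nbrR E A)ᶜ, ⟨hA, hAne, ?_, (compl_ne_univ_iff_nonempty _).mpr hN, ?_⟩,
    subset_rfl⟩
  · simpa [Finset.Nonempty, eq_univ_iff_forall] using hNne
  · intro i hi j hj hE
    exact mem_compl.mp hj (mem_filter.mpr ⟨mem_univ j, i, hi, hE⟩)

lemma hyp1_inter_dualEdgeCone_of_nbrR_eq_univ {A : Finset (Fin m)} (hN : nbrR E A = univ) :
    hyp1 E A ∩ dualEdgeCone E = {x ∈ dualEdgeCone E | ∀ i ∉ A, x (inl i) = 0} := by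
  ext x
  rw [Set.mem_inter_iff, and_comm, Set.mem_ofPred_eq]
  refine and_congr_right fun hx => ?_
  rw [hyp1, Set.mem_ofPred_eq, hN, ← sum_inl_eq_sum_inr_of_mem_dualEdgeCone hx,
    ← sum_add_sum_compl A, left_eq_add,
    sum_eq_zero_iff_of_nonneg fun i _ => apply_inl_nonneg_of_mem_dualEdgeCone hx i]
  simp only [mem_compl]

lemma finrank_span_add_finrank_le_of_subset_ker {K V W : Type*} [Field K] [AddCommGroup V]
    [Module K V] [FiniteDimensional K V] [AddCommGroup W] [Module K W] (f : V →ₗ[K] W)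
    (hf : Function.Surjective f) {S : Set V} (hS : S ⊆ LinearMap.ker f) :
    Module.finrank K (Submodule.span K S) + Module.finrank K W ≤ Module.finrank K V := by
  have hrank := f.finrank_range_add_finrank_ker
  rw [LinearMap.range_eq_top.mpr hf, finrank_top] at hrank
  have hspan := Submodule.finrank_mono (Submodule.span_le.mpr hS)
  omega

def restrictComplHyp1 (E : Fin m → Fin n → Prop) [∀ i j, Decidable (E i j)]
    (A : Finset (Fin m)) :
    ((Fin m ⊕ Fin n) → ℝ) →ₗ[ℝ] ((↥(Aᶜ) → ℝ) × ℝ) :=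
  (LinearMap.pi fun i : ↥(Aᶜ) => LinearMap.proj (inl (i : Fin m))).prod
    (∑ i ∈ A, LinearMap.proj (inl i) - ∑ j ∈ nbrR E A, LinearMap.proj (inr j))

lemma restrictComplHyp1_apply (A : Finset (Fin m)) (x : (Fin m ⊕ Fin n) → ℝ) :
    restrictComplHyp1 E A x =
      (fun i : ↥(Aᶜ) => x (inl i), ∑ i ∈ A, x (inl i) - ∑ j ∈ nbrR E A, x (inr j)) := by
  refine Prod.ext rfl ?_
  simp [restrictComplHyp1, LinearMap.sum_apply]

lemma restrictComplHyp1_surjective {A : Finset (Fin m)} (hN : (nbrR E A).Nonempty) :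
    Function.Surjective (restrictComplHyp1 E A) := by
  rintro ⟨c, t⟩
  obtain ⟨j₀, hj₀⟩ := hN
  refine ⟨Sum.elim (fun i => if h : i ∈ A then 0 else c ⟨i, mem_compl.mpr h⟩)
    (Pi.single j₀ (-t)), ?_⟩
  rw [restrictComplHyp1_apply]
  refine Prod.ext (funext fun i => by simp [dif_neg (mem_compl.mp i.2)]) ?_
  simp [sum_eq_zero fun i (hi : i ∈ A) => dif_pos hi, hj₀]

lemma finrank_span_add_card_compl_le {A : Finset (Fin m)} (hN : (nbrR E A).Nonempty)
    {S : Set ((Fin m ⊕ Fin n) → ℝ)} (hS : S ⊆ hyp1 E A)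
    (hS₀ : ∀ x ∈ S, ∀ i ∉ A, x (inl i) = 0) :
    Module.finrank ℝ (Submodule.span ℝ S) + (#Aᶜ + 1) ≤ m + n := by
  have hker : S ⊆ LinearMap.ker (restrictComplHyp1 E A) := fun x hx => by
    rw [SetLike.mem_coe, LinearMap.mem_ker, restrictComplHyp1_apply]
    exact Prod.ext (funext fun i => hS₀ x hx i (mem_compl.mp i.2)) (sub_eq_zero.mpr (hS hx))
  simpa only [Module.finrank_prod, Module.finrank_fintype_fun_eq_card, Fintype.card_coe,
    Module.finrank_self, Fintype.card_sum, Fintype.card_fin] using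
    finrank_span_add_finrank_le_of_subset_ker _ (restrictComplHyp1_surjective hN) hker

/-- Let `A ⊊ U₁` be a nonempty (one-sided) independent set of a connected
bipartite graph `G ⊆ K_{m,n}`, not contained in any two-sided independent set. If
`H_A ∩ σ_G^∨` is a facet of `σ_G^∨` (its linear span has dimension `m + n - 2`), then
`A = U₁ ∖ {u}` for some vertex `u ∈ U₁`, and `H_A ∩ σ_G^∨ = {x ∈ σ_G^∨ : x_u = 0}`. -/
theorem facet_one_sided (m n : ℕ) (E : Fin m → Fin n → Prop)
    [∀ i j, Decidable (E i j)] (hconn : (toGraph E).Connected)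
    (A : Finset (Fin m)) (hA : A.Nonempty) (hAne : A ≠ Finset.univ)
    (hnot : ¬ ∃ B₁ B₂, TwoSidedIndep E B₁ B₂ ∧ A ⊆ B₁)
    (hfacet : Module.finrank ℝ (Submodule.span ℝ (hyp1 E A ∩ dualEdgeCone E))
      = m + n - 2) :
    ∃ u : Fin m, A = {u}ᶜ ∧
      hyp1 E A ∩ dualEdgeCone E = {x ∈ dualEdgeCone E | x (inl u) = 0} := by
  obtain ⟨a, ha⟩ := hA
  obtain ⟨u, hu⟩ : ∃ u, u ∉ A := by simpa [eq_univ_iff_forall] using hAne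
  have : Nontrivial (Fin m ⊕ Fin n) := ⟨inl a, inl u, inl_injective.ne fun h => hu (h ▸ ha)⟩
  obtain ⟨j, haj⟩ := exists_edge_of_connected hconn a
  have hNne : (nbrR E A).Nonempty := ⟨j, mem_filter.mpr ⟨mem_univ j, a, ha, haj⟩⟩
  have hcut := hyp1_inter_dualEdgeCone_of_nbrR_eq_univ
    (nbrR_eq_univ_of_not_subset_twoSidedIndep ⟨a, ha⟩ hAne hNne hnot)
  have hdim := finrank_span_add_card_compl_le hNne Set.inter_subset_left
    (by rw [hcut]; exact fun x hx => hx.2)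
  have hcompl : Aᶜ = {u} := eq_singleton_iff_unique_mem.mpr
    ⟨mem_compl.mpr hu, fun i hi => card_le_one.mp (by omega) i hi u (mem_compl.mpr hu)⟩
  have hAu : A = {u}ᶜ := by rw [← hcompl, compl_compl]
  refine ⟨u, hAu, ?_⟩
  rw [hcut, hAu]
  simp

end ToricBipartite
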